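/- For every permutation ω ∈ S_n and every index i ∈ {1,…,n}, the entries of the Rajchgot code and the Lehmer code of ω satisfy r_i ≥ c_i. -/

import Mathlib

/-- The Lehmer code of a permutation: `lehmer ω i` counts indices `j > i` with `ω i > ω j`. -/
def lehmer {n : ℕ} (ω : Equiv.Perm (Fin n)) (i : Fin n) : ℕ :=
  (Finset.univ.filter fun j => i < j ∧ ω j < ω i).card

/-- The Rajchgot code of a permutation: `rajchgot ω i` is the minimum number of entries that
must be removed from the sequence `ω i, ω (i+1), …, ω (n-1)` so that the remaining
subsequence is increasing and begins with `ω i`. -/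
noncomputable def rajchgot {n : ℕ} (ω : Equiv.Perm (Fin n)) (i : Fin n) : ℕ :=
  sInf { k : ℕ | ∃ R : Finset (Fin n), R.card = k ∧ (∀ j ∈ R, i ≤ j) ∧ i ∉ R ∧
    ∀ a b : Fin n, i ≤ a → a < b → a ∉ R → b ∉ R → ω a < ω b }

/-!
An entry `ω j < ω i` with `j > i` cannot survive in an increasing subsequence that begins with
`ω i`, so every admissible removal set contains all `lehmer ω i` such positions. Removing every
position after `i` is admissible, so the infimum defining `rajchgot ω i` is over a nonempty set.
-/

def IsRajchgotRemoval {n : ℕ} (ω : Equiv.Perm (Fin n)) (i : Fin n) (R : Finset (Fin n)) :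
    Prop :=
  (∀ j ∈ R, i ≤ j) ∧ i ∉ R ∧ ∀ a b : Fin n, i ≤ a → a < b → a ∉ R → b ∉ R → ω a < ω b

section

variable {n : ℕ} (ω : Equiv.Perm (Fin n)) (i : Fin n)

lemma isRajchgotRemoval_Ioi : IsRajchgotRemoval ω i (Finset.Ioi i) := by
  refine ⟨fun j hj => (Finset.mem_Ioi.mp hj).le, by simp, fun a b hia hab _ hb => ?_⟩
  exact absurd (Finset.mem_Ioi.mpr (hia.trans_lt hab)) hb

lemma filter_inversions_subset_of_isRajchgotRemoval {R : Finset (Fin n)}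
    (hR : IsRajchgotRemoval ω i R) :
    (Finset.univ.filter fun j => i < j ∧ ω j < ω i) ⊆ R := by
  intro j hj
  obtain ⟨hij, hωj⟩ := (Finset.mem_filter.mp hj).2
  by_contra hjR
  exact (hR.2.2 i j le_rfl hij hR.2.1 hjR).not_gt hωj

lemma lehmer_le_card_of_isRajchgotRemoval {R : Finset (Fin n)} (hR : IsRajchgotRemoval ω i R) :
    lehmer ω i ≤ R.card :=
  Finset.card_le_card (filter_inversions_subset_of_isRajchgotRemoval ω i hR)

end

/-- For every permutation `ω ∈ S_n` and every index `i`, the entries of the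
Rajchgot code and the Lehmer code of `ω` satisfy `r_i ≥ c_i`. -/
theorem lehmer_le_rajchgot (n : ℕ) (ω : Equiv.Perm (Fin n)) (i : Fin n) :
    lehmer ω i ≤ rajchgot ω i := by
  refine le_csInf ⟨_, _, rfl, isRajchgotRemoval_Ioi ω i⟩ ?_
  rintro _ ⟨R, rfl, hR⟩
  exact lehmer_le_card_of_isRajchgotRemoval ω i hR
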